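/- Fix positive integers d, r, c and a d-RSK growth diagram (P, m) on the r×c rectangle. Let λ^{(0)}, λ^{(1)}, …, λ^{(r+c)} be the sequence of d-partitions along the outer boundary, defined by λ^{(j)} = P(r, j) for 0 ≤ j ≤ c and λ^{(c+i)} = P(r−i, c) for 1 ≤ i ≤ r. Then the maximum length of an NE-chain in the filling m equals max_{1 ≤ i ≤ r+c} MCW_d(λ^{(i−1)}, λ^{(i)}), where for d-partitions with α ≺ β one sets MCW_d(α,β) = MCW_d(β,α) = β_1 − α_d (both maxima being 0 if taken over an empty collection of nonzero values). -/

import Mathlib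

/-!
Both sides obey the last-passage recursion `G(x+1, y+1) = m(x, y) + max (G(x, y+1), G(x+1, y))`
with `G = 0` on the axes, where `G(x, y)` concerns the rectangle `[0, x) × [0, y)`.  For NE-chains
this is the usual last-passage percolation argument: look at the last cell of a chain.  On the
other side, let `W(x, y)` be the largest `MCW` along the lattice path `(x, 0) → (x, y) → (0, y)`.
The `λ₁`-rule at a cell says exactly that the larger of the two new path edges is `m` plus the
larger of the two old ones.  If `m = 0` the rest of the path is unchanged; otherwise `κ_d = 0`,
so the two old edges have weights `μ₁` and `ν₁`, which bound every `MCW` behind them.  Only the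
largest and smallest parts of the partitions enter.
-/

/-- `α ≺ β`: `β₁ ≥ α₁ ≥ β₂ ≥ α₂ ≥ ⋯ ≥ β_d ≥ α_d` (0-indexed). -/
def Interlace (d : ℕ) (α β : Fin d → ℕ) : Prop :=
  (∀ i, α i ≤ β i) ∧ ∀ i : Fin d, ∀ h : (i : ℕ) + 1 < d, β ⟨(i : ℕ) + 1, h⟩ ≤ α i

/-- `(P, m)` is a `d`-RSK growth diagram on the `r×c` rectangle: `P` assigns a
`d`-partition to each lattice point, vanishing on the axes, `m` assigns an entry to each
cell, and every cell—with corners `κ = P(x-1,y-1)`, `μ = P(x-1,y)`, `ν = P(x,y-1)`,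
`ρ = P(x,y)` and entry `m`—satisfies the `d`-RSK local rule. -/
def IsDRSKGrowth (d r c : ℕ) (P : Fin (r + 1) → Fin (c + 1) → Fin d → ℕ)
    (m : Fin r → Fin c → ℕ) : Prop :=
  (∀ x y, Antitone (P x y)) ∧
  (∀ x, P x 0 = fun _ => 0) ∧
  (∀ y, P 0 y = fun _ => 0) ∧
  ∀ (x : Fin r) (y : Fin c),
    Interlace d (P x.castSucc y.castSucc) (P x.castSucc y.succ) ∧
    Interlace d (P x.castSucc y.castSucc) (P x.succ y.castSucc) ∧
    Interlace d (P x.castSucc y.succ) (P x.succ y.succ) ∧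
    Interlace d (P x.succ y.castSucc) (P x.succ y.succ) ∧
    (m x y = 0 ∨ ∀ h : 0 < d, P x.castSucc y.castSucc ⟨d - 1, Nat.sub_lt h Nat.one_pos⟩ = 0) ∧
    (∀ h : 0 < d,
      P x.succ y.succ ⟨0, h⟩ + P x.castSucc y.castSucc ⟨d - 1, Nat.sub_lt h Nat.one_pos⟩ =
        m x y +
          min (P x.castSucc y.succ ⟨d - 1, Nat.sub_lt h Nat.one_pos⟩)
              (P x.succ y.castSucc ⟨d - 1, Nat.sub_lt h Nat.one_pos⟩) +
          max (P x.castSucc y.succ ⟨0, h⟩) (P x.succ y.castSucc ⟨0, h⟩)) ∧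
    ∀ i : Fin d, 0 < (i : ℕ) →
      P x.succ y.succ i +
          P x.castSucc y.castSucc ⟨(i : ℕ) - 1, lt_of_le_of_lt (Nat.sub_le _ _) i.isLt⟩ =
        min (P x.castSucc y.succ ⟨(i : ℕ) - 1, lt_of_le_of_lt (Nat.sub_le _ _) i.isLt⟩)
            (P x.succ y.castSucc ⟨(i : ℕ) - 1, lt_of_le_of_lt (Nat.sub_le _ _) i.isLt⟩) +
          max (P x.castSucc y.succ i) (P x.succ y.castSucc i)

open Finset

namespace Fin

lemma strictMono_snoc {α : Type*} [Preorder α] {n : ℕ} {f : Fin n → α} (hf : StrictMono f)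
    {a : α} (ha : ∀ i, f i < a) : StrictMono (snoc f a : Fin (n + 1) → α) := by
  intro i j hij
  induction j using lastCases with
  | last =>
    obtain ⟨i, rfl⟩ := i.eq_castSucc_of_ne_last (ne_last_of_lt hij)
    simpa using ha i
  | cast j =>
    obtain ⟨i, rfl⟩ := i.eq_castSucc_of_ne_last (ne_last_of_lt (hij.trans (castSucc_lt_last j)))
    simpa using hf (castSucc_lt_castSucc_iff.mp hij)

lemma clamp_eq_castSucc {x n : ℕ} (h : x < n) : clamp x n = (⟨x, h⟩ : Fin n).castSucc :=
  Fin.ext (by simp; omega)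

lemma clamp_succ_eq_succ {x n : ℕ} (h : x < n) : clamp (x + 1) n = (⟨x, h⟩ : Fin n).succ :=
  Fin.ext (by simp; omega)

end Fin

namespace DRSK

def lastPassage (e : ℕ → ℕ → ℕ) : ℕ → ℕ → ℕ
  | 0, _ => 0
  | _ + 1, 0 => 0
  | x + 1, y + 1 => e x y + max (lastPassage e x (y + 1)) (lastPassage e (x + 1) y)

section LastPassage

variable (e : ℕ → ℕ → ℕ)

@[simp]
lemma lastPassage_zero_left (y : ℕ) : lastPassage e 0 y = 0 := by
  simp [lastPassage]

@[simp]
lemma lastPassage_zero_right (x : ℕ) : lastPassage e x 0 = 0 := by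
  cases x <;> simp [lastPassage]

lemma lastPassage_succ_succ (x y : ℕ) :
    lastPassage e (x + 1) (y + 1) =
      e x y + max (lastPassage e x (y + 1)) (lastPassage e (x + 1) y) := by
  rw [lastPassage]

lemma lastPassage_le_succ_left (x y : ℕ) : lastPassage e x y ≤ lastPassage e (x + 1) y := by
  cases y with
  | zero => simp
  | succ y => rw [lastPassage_succ_succ]; omega

lemma lastPassage_le_succ_right (x y : ℕ) : lastPassage e x y ≤ lastPassage e x (y + 1) := by
  cases x with
  | zero => simp
  | succ x => rw [lastPassage_succ_succ]; omega

lemma lastPassage_mono {x x' y y' : ℕ} (hx : x ≤ x') (hy : y ≤ y') :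
    lastPassage e x y ≤ lastPassage e x' y' :=
  calc lastPassage e x y
      ≤ lastPassage e x' y := monotone_nat_of_le_succ (lastPassage_le_succ_left e · y) hx
    _ ≤ lastPassage e x' y' := monotone_nat_of_le_succ (lastPassage_le_succ_right e x') hy

end LastPassage

section Chains

variable {r c : ℕ} (m : Fin r → Fin c → ℕ)

def cellEntry (x y : ℕ) : ℕ :=
  if h : x < r ∧ y < c then m ⟨x, h.1⟩ ⟨y, h.2⟩ else 0

@[simp]
lemma cellEntry_val (x : Fin r) (y : Fin c) : cellEntry m x y = m x y := by
  simp [cellEntry]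

lemma sum_le_lastPassage_last {K : ℕ} (s : Fin (K + 1) → Fin r × Fin c) (hs : StrictMono s) :
    ∑ i, m (s i).1 (s i).2 ≤
      lastPassage (cellEntry m) ((s (Fin.last K)).1 + 1) ((s (Fin.last K)).2 + 1) := by
  induction K with
  | zero =>
    rw [lastPassage_succ_succ]
    simp
  | succ K ih =>
    have hprefix := ih (s ∘ Fin.castSucc) (hs.comp Fin.strictMono_castSucc)
    have hlast : s (Fin.last K).castSucc < s (Fin.last (K + 1)) := hs (Fin.castSucc_lt_last _)
    rw [Fin.sum_univ_castSucc, lastPassage_succ_succ, cellEntry_val]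
    simp only [Function.comp_apply] at hprefix
    set p := s (Fin.last K).castSucc
    set q := s (Fin.last (K + 1))
    have hmono : lastPassage (cellEntry m) (p.1 + 1) (p.2 + 1) ≤
        max (lastPassage (cellEntry m) q.1 (q.2 + 1))
          (lastPassage (cellEntry m) (q.1 + 1) q.2) := by
      rcases Prod.lt_iff.mp hlast with ⟨h1, h2⟩ | ⟨h1, h2⟩
      · exact le_max_of_le_left (lastPassage_mono _ h1 (by omega))
      · exact le_max_of_le_right (lastPassage_mono _ (by omega) h2)
    omega

lemma sum_le_lastPassage {K : ℕ} (s : Fin K → Fin r × Fin c) (hs : StrictMono s) :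
    ∑ i, m (s i).1 (s i).2 ≤ lastPassage (cellEntry m) r c := by
  cases K with
  | zero => simp
  | succ K =>
    exact (sum_le_lastPassage_last m s hs).trans (lastPassage_mono _ (by omega) (by omega))

/-- The hypothesis `hbelow` says that every cell of `s` lies strictly below `(x, y)` in the
product order. -/
lemma exists_chain_extend {x y K : ℕ} (s : Fin K → Fin r × Fin c) (hs : StrictMono s)
    (hm : ∀ i, m (s i).1 (s i).2 ≠ 0)
    (hbelow : ∀ i, (s i).1 < x ∧ (s i).2 < y + 1 ∨ (s i).1 < x + 1 ∧ (s i).2 < y) :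
    ∃ (K' : ℕ) (s' : Fin K' → Fin r × Fin c), StrictMono s' ∧
      (∀ i, m (s' i).1 (s' i).2 ≠ 0) ∧
      (∀ i, (s' i).1 < x + 1 ∧ (s' i).2 < y + 1) ∧
      ∑ i, m (s' i).1 (s' i).2 = ∑ i, m (s i).1 (s i).2 + cellEntry m x y := by
  have hbox (i : Fin K) : (s i).1 < x + 1 ∧ (s i).2 < y + 1 := by
    have := hbelow i
    omega
  by_cases hcell : ∃ (hx : x < r) (hy : y < c), m ⟨x, hx⟩ ⟨y, hy⟩ ≠ 0
  · obtain ⟨hx, hy, hmxy⟩ := hcell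
    refine ⟨K + 1, Fin.snoc s (⟨x, hx⟩, ⟨y, hy⟩), Fin.strictMono_snoc hs fun i => ?_,
      fun i => ?_, fun i => ?_, ?_⟩
    · have := hbelow i
      exact Prod.lt_iff.mpr (by simp only [Fin.lt_def, Fin.le_def]; omega)
    · induction i using Fin.lastCases <;> simp [hm, hmxy]
    · induction i using Fin.lastCases <;> simp [hbox]
    · simp [Fin.sum_univ_castSucc, cellEntry, hx, hy]
  · have hzero : cellEntry m x y = 0 :=
      dite_eq_right_iff.mpr fun h => by_contra fun hne => hcell ⟨h.1, h.2, hne⟩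
    exact ⟨K, s, hs, hm, hbox, by rw [hzero, add_zero]⟩

lemma exists_chain_sum_eq_lastPassage (x y : ℕ) :
    ∃ (K : ℕ) (s : Fin K → Fin r × Fin c), StrictMono s ∧
      (∀ i, m (s i).1 (s i).2 ≠ 0) ∧
      (∀ i, (s i).1 < x ∧ (s i).2 < y) ∧
      ∑ i, m (s i).1 (s i).2 = lastPassage (cellEntry m) x y := by
  induction x, y using lastPassage.induct with
  | case1 _ | case2 _ =>
    exact ⟨0, Fin.elim0, fun i => i.elim0, fun i => i.elim0, fun i => i.elim0, by simp⟩
  | case3 x y ihl ihr =>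
    rw [lastPassage_succ_succ, add_comm]
    rcases le_total (lastPassage (cellEntry m) (x + 1) y) (lastPassage (cellEntry m) x (y + 1))
      with hle | hle
    · obtain ⟨K, s, hs, hm, hbox, hsum⟩ := ihl
      rw [max_eq_left hle, ← hsum]
      exact exists_chain_extend m s hs hm fun i => Or.inl (hbox i)
    · obtain ⟨K, s, hs, hm, hbox, hsum⟩ := ihr
      rw [max_eq_right hle, ← hsum]
      exact exists_chain_extend m s hs hm fun i => Or.inr (hbox i)

theorem sSup_chain_sum_eq_lastPassage :
    sSup {ℓ : ℕ | ∃ (K : ℕ) (s : Fin K → Fin r × Fin c), Function.Injective s ∧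
        (∀ i j : Fin K, i ≤ j → (s i).1 ≤ (s j).1) ∧
        (∀ i j : Fin K, i ≤ j → (s i).2 ≤ (s j).2) ∧
        (∀ i, m (s i).1 (s i).2 ≠ 0) ∧
        ∑ i, m (s i).1 (s i).2 = ℓ} = lastPassage (cellEntry m) r c := by
  refine IsGreatest.csSup_eq ⟨?_, ?_⟩
  · obtain ⟨K, s, hs, hm, -, hsum⟩ := exists_chain_sum_eq_lastPassage m r c
    exact ⟨K, s, hs.injective, fun i j hij => (hs.monotone hij).1,
      fun i j hij => (hs.monotone hij).2, hm, hsum⟩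
  · rintro ℓ ⟨K, s, hinj, hmono₁, hmono₂, -, rfl⟩
    have hmono : Monotone s := fun i j hij => ⟨hmono₁ i j hij, hmono₂ i j hij⟩
    exact sum_le_lastPassage m s (hmono.strictMono_of_injective hinj)

end Chains

/-- `a` and `b` play the largest and smallest parts `P(x, y)₁`, `P(x, y)_d` of a growth diagram
with entries `e`, extended to all of `ℕ × ℕ`. -/
structure IsExtremePartGrowth (e a b : ℕ → ℕ → ℕ) : Prop where
  smallest_le_largest (x y : ℕ) : b x y ≤ a x y
  largest_zero_left (y : ℕ) : a 0 y = 0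
  largest_zero_right (x : ℕ) : a x 0 = 0
  largest_le_succ_left (x y : ℕ) : a x y ≤ a (x + 1) y
  largest_le_succ_right (x y : ℕ) : a x y ≤ a x (y + 1)
  smallest_le_succ_left (x y : ℕ) : b x y ≤ b (x + 1) y
  smallest_le_succ_right (x y : ℕ) : b x y ≤ b x (y + 1)
  entry_eq_zero_or_smallest_eq_zero (x y : ℕ) : e x y = 0 ∨ b x y = 0
  local_rule (x y : ℕ) : a (x + 1) (y + 1) + b x y =
    e x y + min (b x (y + 1)) (b (x + 1) y) + max (a x (y + 1)) (a (x + 1) y)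

section Boundary

variable (a b : ℕ → ℕ → ℕ)

def colEdge (x y : ℕ) : ℕ := a x (y + 1) - b x y

def rowEdge (x y : ℕ) : ℕ := a (x + 1) y - b x y

def colMax (x y : ℕ) : ℕ := (range y).sup (colEdge a b x)

def rowMax (x y : ℕ) : ℕ := (range x).sup (rowEdge a b · y)

/-- The largest `MCW` along the path `(x, 0) → (x, y) → (0, y)`: on interlacing neighbours `MCW`
is `colEdge` or `rowEdge` (`IsExtremePartGrowth.max_sub_eq_colEdge`). -/
def boundaryMax (x y : ℕ) : ℕ := max (colMax a b x y) (rowMax a b x y)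

@[simp]
lemma colMax_zero (x : ℕ) : colMax a b x 0 = 0 := rfl

@[simp]
lemma rowMax_zero (y : ℕ) : rowMax a b 0 y = 0 := rfl

lemma colMax_succ (x y : ℕ) :
    colMax a b x (y + 1) = max (colEdge a b x y) (colMax a b x y) := by
  simp [colMax, range_add_one]

lemma rowMax_succ (x y : ℕ) :
    rowMax a b (x + 1) y = max (rowEdge a b x y) (rowMax a b x y) := by
  simp [rowMax, range_add_one]

lemma sup_boundaryPath_eq_boundaryMax (r c : ℕ) :
    (univ.sup fun i : Fin (r + c) =>
      if (i : ℕ) < c then colEdge a b r i else rowEdge a b (r + c - 1 - i) c) =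
      boundaryMax a b r c := by
  apply le_antisymm
  · refine Finset.sup_le fun i _ => ?_
    split_ifs with hi
    · exact le_max_of_le_left (le_sup (mem_range.mpr hi))
    · exact le_max_of_le_right (le_sup (f := (rowEdge a b · c)) (mem_range.mpr (by omega)))
  · refine max_le (Finset.sup_le fun y hy => ?_) (Finset.sup_le fun x hx => ?_)
    · rw [mem_range] at hy
      exact le_sup_of_le (mem_univ ⟨y, by omega⟩) (by simp [hy])
    · rw [mem_range] at hx
      refine le_sup_of_le (mem_univ ⟨r + c - 1 - x, by omega⟩) ?_
      simp only [show ¬ r + c - 1 - x < c by omega, if_false]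
      rw [show r + c - 1 - (r + c - 1 - x) = x by omega]

end Boundary

namespace IsExtremePartGrowth

variable {e a b : ℕ → ℕ → ℕ}

lemma max_sub_eq_colEdge (h : IsExtremePartGrowth e a b) (x y : ℕ) :
    max (a x (y + 1) - b x y) (a x y - b x (y + 1)) = colEdge a b x y := by
  have := h.largest_le_succ_right x y
  have := h.smallest_le_succ_right x y
  simp only [colEdge]
  omega

lemma max_sub_eq_rowEdge (h : IsExtremePartGrowth e a b) (x y : ℕ) :
    max (a x y - b (x + 1) y) (a (x + 1) y - b x y) = rowEdge a b x y := by
  have := h.largest_le_succ_left x y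
  have := h.smallest_le_succ_left x y
  simp only [rowEdge]
  omega

lemma max_rowEdge_colEdge_succ (h : IsExtremePartGrowth e a b) (x y : ℕ) :
    max (rowEdge a b x (y + 1)) (colEdge a b (x + 1) y) =
      e x y + max (colEdge a b x y) (rowEdge a b x y) := by
  have := h.local_rule x y
  have := h.smallest_le_largest x y
  have := h.largest_le_succ_left x y
  have := h.largest_le_succ_right x y
  simp only [rowEdge, colEdge]
  omega

lemma colMax_le (h : IsExtremePartGrowth e a b) (x y : ℕ) :
    colMax a b x y ≤ max (colMax a b (x + 1) y) (rowEdge a b x y) := by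
  induction y with
  | zero => simp
  | succ y ih =>
    have := h.max_rowEdge_colEdge_succ x y
    rw [colMax_succ, colMax_succ]
    omega

lemma rowMax_le (h : IsExtremePartGrowth e a b) (x y : ℕ) :
    rowMax a b x y ≤ max (rowMax a b x (y + 1)) (colEdge a b x y) := by
  induction x with
  | zero => simp
  | succ x ih =>
    have := h.max_rowEdge_colEdge_succ x y
    rw [rowMax_succ, rowMax_succ]
    omega

lemma boundaryMax_le_largest (h : IsExtremePartGrowth e a b) (x y : ℕ) :
    boundaryMax a b x y ≤ a x y := by
  refine max_le (Finset.sup_le fun j hj => ?_) (Finset.sup_le fun i hi => ?_)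
  · exact (Nat.sub_le _ _).trans
      (monotone_nat_of_le_succ (h.largest_le_succ_right x) (mem_range.mp hj))
  · exact (Nat.sub_le _ _).trans
      (monotone_nat_of_le_succ (h.largest_le_succ_left · y) (mem_range.mp hi))

lemma boundaryMax_zero_left (h : IsExtremePartGrowth e a b) (y : ℕ) :
    boundaryMax a b 0 y = 0 :=
  Nat.le_zero.mp ((h.boundaryMax_le_largest 0 y).trans (h.largest_zero_left y).le)

lemma boundaryMax_zero_right (h : IsExtremePartGrowth e a b) (x : ℕ) :
    boundaryMax a b x 0 = 0 :=
  Nat.le_zero.mp ((h.boundaryMax_le_largest x 0).trans (h.largest_zero_right x).le)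

lemma boundaryMax_succ_succ (h : IsExtremePartGrowth e a b) (x y : ℕ) :
    boundaryMax a b (x + 1) (y + 1) =
      e x y + max (boundaryMax a b x (y + 1)) (boundaryMax a b (x + 1) y) := by
  have hedge := h.max_rowEdge_colEdge_succ x y
  rcases h.entry_eq_zero_or_smallest_eq_zero x y with he | hb
  · have hcol := h.colMax_le x y
    have hrow := h.rowMax_le x y
    simp only [boundaryMax, colMax_succ, rowMax_succ] at hcol hrow ⊢
    omega
  · have hW₁ : boundaryMax a b x (y + 1) = colEdge a b x y := by
      refine le_antisymm ?_ (le_max_of_le_left (colMax_succ a b x y ▸ le_max_left _ _))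
      simpa [colEdge, hb] using h.boundaryMax_le_largest x (y + 1)
    have hW₂ : boundaryMax a b (x + 1) y = rowEdge a b x y := by
      refine le_antisymm ?_ (le_max_of_le_right (rowMax_succ a b x y ▸ le_max_left _ _))
      simpa [rowEdge, hb] using h.boundaryMax_le_largest (x + 1) y
    have hcol : colMax a b (x + 1) y ≤ rowEdge a b x y := hW₂ ▸ le_max_left _ _
    have hrow : rowMax a b x (y + 1) ≤ colEdge a b x y := hW₁ ▸ le_max_right _ _
    rw [hW₁, hW₂, ← hedge, boundaryMax, colMax_succ, rowMax_succ]
    omega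

theorem boundaryMax_eq_lastPassage (h : IsExtremePartGrowth e a b) (x y : ℕ) :
    boundaryMax a b x y = lastPassage e x y := by
  induction x, y using lastPassage.induct with
  | case1 y => rw [h.boundaryMax_zero_left, lastPassage]
  | case2 x => rw [h.boundaryMax_zero_right, lastPassage]
  | case3 x y ihl ihr => rw [h.boundaryMax_succ_succ, lastPassage_succ_succ, ihl, ihr]

end IsExtremePartGrowth

section ExtendGrid

variable {α : Type*} {r c : ℕ} (P : Fin (r + 1) → Fin (c + 1) → α)

def extendGrid (x y : ℕ) : α :=
  P (Fin.clamp x r) (Fin.clamp y c)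

lemma extendGrid_of_le_left {x : ℕ} (hx : r ≤ x) (y : ℕ) :
    extendGrid P x y = extendGrid P r y := by
  simp only [extendGrid, Fin.clamp_eq_last _ _ hx, Fin.clamp_eq_last _ _ le_rfl]

lemma extendGrid_of_le_right (x : ℕ) {y : ℕ} (hy : c ≤ y) :
    extendGrid P x y = extendGrid P x c := by
  simp only [extendGrid, Fin.clamp_eq_last _ _ hy, Fin.clamp_eq_last _ _ le_rfl]

lemma extendGrid_succ_left_of_le {x : ℕ} (hx : r ≤ x) (y : ℕ) :
    extendGrid P (x + 1) y = extendGrid P x y := by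
  rw [extendGrid_of_le_left P (x := x + 1) (by omega), extendGrid_of_le_left P hx]

lemma extendGrid_succ_right_of_le (x : ℕ) {y : ℕ} (hy : c ≤ y) :
    extendGrid P x (y + 1) = extendGrid P x y := by
  rw [extendGrid_of_le_right P x (y := y + 1) (by omega), extendGrid_of_le_right P x hy]

lemma boundary_eq_extendGrid (lam : Fin (r + c + 1) → α)
    (hlam : ∀ i : Fin (r + c + 1),
      lam i = if h : (i : ℕ) ≤ c then P (Fin.last r) ⟨(i : ℕ), Nat.lt_succ_of_le h⟩
              else P ⟨r - ((i : ℕ) - c), Nat.lt_succ_of_le (Nat.sub_le _ _)⟩ (Fin.last c))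
    (i : Fin (r + c + 1)) :
    lam i = extendGrid P (r + c - i) i := by
  rw [hlam i, extendGrid]
  split_ifs <;> congr 1 <;> ext <;> simp <;> omega

end ExtendGrid

section Parts

variable {d r c : ℕ} (hd : 0 < d) (P : Fin (r + 1) → Fin (c + 1) → Fin d → ℕ)

def largestPart (x y : ℕ) : ℕ := extendGrid P x y ⟨0, hd⟩

def smallestPart (x y : ℕ) : ℕ := extendGrid P x y ⟨d - 1, Nat.sub_lt hd Nat.one_pos⟩

end Parts

end DRSK

namespace IsDRSKGrowth

open DRSK

variable {d r c : ℕ} {P : Fin (r + 1) → Fin (c + 1) → Fin d → ℕ}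
  {m : Fin r → Fin c → ℕ}

lemma castSucc_le_succ_left (hPm : IsDRSKGrowth d r c P m) (x : Fin r) (y : Fin (c + 1))
    (i : Fin d) : P x.castSucc y i ≤ P x.succ y i := by
  induction y using Fin.cases with
  | zero => simp [hPm.2.1]
  | succ y =>
    obtain ⟨-, -, hrow, -⟩ := hPm.2.2.2 x y
    exact hrow.1 i

lemma castSucc_le_succ_right (hPm : IsDRSKGrowth d r c P m) (x : Fin (r + 1)) (y : Fin c)
    (i : Fin d) : P x y.castSucc i ≤ P x y.succ i := by
  induction x using Fin.cases with
  | zero => simp [hPm.2.2.1]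
  | succ x =>
    obtain ⟨-, -, -, hcol, -⟩ := hPm.2.2.2 x y
    exact hcol.1 i

lemma extendGrid_le_succ_left (hPm : IsDRSKGrowth d r c P m) (x y : ℕ) (i : Fin d) :
    extendGrid P x y i ≤ extendGrid P (x + 1) y i := by
  rcases lt_or_ge x r with hx | hx
  · simpa only [extendGrid, Fin.clamp_eq_castSucc hx, Fin.clamp_succ_eq_succ hx]
      using hPm.castSucc_le_succ_left ⟨x, hx⟩ (Fin.clamp y c) i
  · rw [extendGrid_succ_left_of_le P hx]

lemma extendGrid_le_succ_right (hPm : IsDRSKGrowth d r c P m) (x y : ℕ) (i : Fin d) :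
    extendGrid P x y i ≤ extendGrid P x (y + 1) i := by
  rcases lt_or_ge y c with hy | hy
  · simpa only [extendGrid, Fin.clamp_eq_castSucc hy, Fin.clamp_succ_eq_succ hy]
      using hPm.castSucc_le_succ_right (Fin.clamp x r) ⟨y, hy⟩ i
  · rw [extendGrid_succ_right_of_le P x hy]

lemma local_rule_of_lt (hPm : IsDRSKGrowth d r c P m) (hd : 0 < d) {x y : ℕ} (hx : x < r)
    (hy : y < c) :
    (cellEntry m x y = 0 ∨ smallestPart hd P x y = 0) ∧
      largestPart hd P (x + 1) (y + 1) + smallestPart hd P x y =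
        cellEntry m x y + min (smallestPart hd P x (y + 1)) (smallestPart hd P (x + 1) y) +
          max (largestPart hd P x (y + 1)) (largestPart hd P (x + 1) y) := by
  obtain ⟨-, -, -, -, hzero, hrule, -⟩ := hPm.2.2.2 ⟨x, hx⟩ ⟨y, hy⟩
  simp only [cellEntry, dif_pos (And.intro hx hy), largestPart, smallestPart, extendGrid,
    Fin.clamp_eq_castSucc hx, Fin.clamp_eq_castSucc hy, Fin.clamp_succ_eq_succ hx,
    Fin.clamp_succ_eq_succ hy]
  exact ⟨hzero.imp_right (· hd), hrule hd⟩

theorem isExtremePartGrowth (hPm : IsDRSKGrowth d r c P m) (hd : 0 < d) :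
    IsExtremePartGrowth (cellEntry m) (largestPart hd P) (smallestPart hd P) where
  smallest_le_largest x y := hPm.1 _ _ (Fin.mk_le_mk.mpr (Nat.zero_le _))
  largest_zero_left y := congrFun (hPm.2.2.1 _) _
  largest_zero_right x := congrFun (hPm.2.1 _) _
  largest_le_succ_left x y := hPm.extendGrid_le_succ_left x y _
  largest_le_succ_right x y := hPm.extendGrid_le_succ_right x y _
  smallest_le_succ_left x y := hPm.extendGrid_le_succ_left x y _
  smallest_le_succ_right x y := hPm.extendGrid_le_succ_right x y _
  entry_eq_zero_or_smallest_eq_zero x y := by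
    by_cases hxy : x < r ∧ y < c
    · exact (hPm.local_rule_of_lt hd hxy.1 hxy.2).1
    · simp [cellEntry, hxy]
  local_rule x y := by
    by_cases hxy : x < r ∧ y < c
    · exact (hPm.local_rule_of_lt hd hxy.1 hxy.2).2
    have hzero : cellEntry m x y = 0 := by simp [cellEntry, hxy]
    -- Beyond the rectangle the grid is constant in one direction, so the rule degenerates.
    rcases not_and_or.mp hxy with hx | hy
    · have ha := hPm.extendGrid_le_succ_right x y ⟨0, hd⟩
      have hb := hPm.extendGrid_le_succ_right x y ⟨d - 1, Nat.sub_lt hd Nat.one_pos⟩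
      simp only [largestPart, smallestPart, hzero,
        extendGrid_succ_left_of_le P (not_lt.mp hx)] at ha hb ⊢
      omega
    · have ha := hPm.extendGrid_le_succ_left x y ⟨0, hd⟩
      have hb := hPm.extendGrid_le_succ_left x y ⟨d - 1, Nat.sub_lt hd Nat.one_pos⟩
      simp only [largestPart, smallestPart, hzero,
        extendGrid_succ_right_of_le P _ (not_lt.mp hy)] at ha hb ⊢
      omega

lemma sup_boundary_eq_boundaryMax (hPm : IsDRSKGrowth d r c P m) (hd : 0 < d)
    (lam : Fin (r + c + 1) → Fin d → ℕ)
    (hlam : ∀ i : Fin (r + c + 1), lam i = extendGrid P (r + c - i) i) :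
    (univ.sup fun i : Fin (r + c) =>
        max (lam i.succ ⟨0, hd⟩ - lam i.castSucc ⟨d - 1, Nat.sub_lt hd Nat.one_pos⟩)
            (lam i.castSucc ⟨0, hd⟩ - lam i.succ ⟨d - 1, Nat.sub_lt hd Nat.one_pos⟩)) =
      boundaryMax (largestPart hd P) (smallestPart hd P) r c := by
  rw [← sup_boundaryPath_eq_boundaryMax]
  refine Finset.sup_congr rfl fun i _ => ?_
  have hG := hPm.isExtremePartGrowth hd
  simp only [hlam, Fin.val_succ, Fin.val_castSucc]
  split_ifs with hi
  · rw [← hG.max_sub_eq_colEdge]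
    simp only [largestPart, smallestPart]
    rw [extendGrid_of_le_left P (x := r + c - (i + 1)) (by omega),
      extendGrid_of_le_left P (x := r + c - i) (by omega)]
  · rw [← hG.max_sub_eq_rowEdge]
    simp only [largestPart, smallestPart, extendGrid_of_le_right P _ (y := (i : ℕ)) (by omega),
      extendGrid_of_le_right P _ (y := (i : ℕ) + 1) (by omega),
      show r + c - (i + 1) = r + c - 1 - i by omega, show r + c - i = r + c - 1 - i + 1 by omega]

end IsDRSKGrowth

/-- In a `d`-RSK growth diagram on the `r×c` rectangle, the maximal length (sum of
entries) of an NE-chain of the filling equals the maximum of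
`MCW_d(λ⁽ⁱ⁻¹⁾, λ⁽ⁱ⁾)` over the sequence `λ⁽⁰⁾,…,λ⁽ʳ⁺ᶜ⁾` of partitions along the outer
boundary, where for interlacing partitions `MCW_d(α,β) = MCW_d(β,α) = β₁ - α_d`
(for `α ≺ β`), expressed here as `max(β₁ ∸ α_d, α₁ ∸ β_d)` in truncated subtraction. -/
theorem dRSK_growth_NE_chain_eq_MCW (d r c : ℕ) (hd : 0 < d)
    (P : Fin (r + 1) → Fin (c + 1) → Fin d → ℕ) (m : Fin r → Fin c → ℕ)
    (hPm : IsDRSKGrowth d r c P m)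
    (lam : Fin (r + c + 1) → Fin d → ℕ)
    (hlam : ∀ i : Fin (r + c + 1),
      lam i = if h : (i : ℕ) ≤ c then P (Fin.last r) ⟨(i : ℕ), by omega⟩
              else P ⟨r - ((i : ℕ) - c), by omega⟩ (Fin.last c)) :
    sSup {ℓ : ℕ | ∃ (K : ℕ) (s : Fin K → Fin r × Fin c), Function.Injective s ∧
        (∀ i j : Fin K, i ≤ j → (s i).1 ≤ (s j).1) ∧
        (∀ i j : Fin K, i ≤ j → (s i).2 ≤ (s j).2) ∧
        (∀ i, m (s i).1 (s i).2 ≠ 0) ∧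
        ∑ i, m (s i).1 (s i).2 = ℓ} =
      Finset.univ.sup fun i : Fin (r + c) =>
        max (lam i.succ ⟨0, hd⟩ - lam i.castSucc ⟨d - 1, Nat.sub_lt hd Nat.one_pos⟩)
            (lam i.castSucc ⟨0, hd⟩ - lam i.succ ⟨d - 1, Nat.sub_lt hd Nat.one_pos⟩) := by
  rw [hPm.sup_boundary_eq_boundaryMax hd lam (DRSK.boundary_eq_extendGrid P lam hlam),
    (hPm.isExtremePartGrowth hd).boundaryMax_eq_lastPassage]
  exact DRSK.sSup_chain_sum_eq_lastPassage m
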